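/- Let Y = ΨD + W where D is block P-sparse with support Ω_T, and let Ω̂ be any block-index set with |Ω̂| ≤ P. Define the estimator D̂ by D̂_{Ω̂} = Ψ_{Ω̂}^† Y and D̂ = 0 outside Ω̂. Then ‖D − D̂‖_F ≤ ((1 − δ_P + δ_{2P})/(1 − δ_P)) ‖D_{Ω_T∖Ω̂}‖_F + (√(1+δ_P)/(1−δ_P)) ‖W‖_F, assuming Ψ satisfies the structured RIP with δ_{2P} < 1. -/

import Mathlib

open scoped BigOperators
open Matrix
noncomputable section

variable {Np M L R : ℕ}

/-- Frobenius norm of a complex matrix. -/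
def frob {m n : Type*} [Fintype m] [Fintype n] (A : Matrix m n ℂ) : ℝ :=
  Real.sqrt (∑ i, ∑ j, ‖A i j‖ ^ 2)

/-- `D` is block-supported on the block-index set `Ω`. -/
def SuppOn (Ω : Finset (Fin L)) (D : Matrix (Fin L × Fin M) (Fin R) ℂ) : Prop :=
  ∀ p r, p.1 ∉ Ω → D p r = 0

/-- Column-block submatrix `Ψ_Ω` of `Ψ`. -/
def bsub (Ψ : Matrix (Fin Np) (Fin L × Fin M) ℂ) (Ω : Finset (Fin L)) :
    Matrix (Fin Np) ({l // l ∈ Ω} × Fin M) ℂ :=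
  Ψ.submatrix id (fun q => ((q.1 : Fin L), q.2))

/-- Row-block submatrix `D_Ω` of `D`. -/
def rsub (D : Matrix (Fin L × Fin M) (Fin R) ℂ) (Ω : Finset (Fin L)) :
    Matrix ({l // l ∈ Ω} × Fin M) (Fin R) ℂ :=
  D.submatrix (fun q => ((q.1 : Fin L), q.2)) id

/-- Moore–Penrose pseudoinverse `Ψ_Ω^† = (Ψ_Ωᴴ Ψ_Ω)⁻¹ Ψ_Ωᴴ` of the column-block submatrix. -/
def bpinv (Ψ : Matrix (Fin Np) (Fin L × Fin M) ℂ) (Ω : Finset (Fin L)) :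
    Matrix ({l // l ∈ Ω} × Fin M) (Fin Np) ℂ :=
  ((bsub Ψ Ω)ᴴ * bsub Ψ Ω)⁻¹ * (bsub Ψ Ω)ᴴ

/-- Re-embed a matrix indexed by the blocks of `Ω` as a full `ML × R` matrix, zero outside `Ω`. -/
def expand (Ω : Finset (Fin L)) (X : Matrix ({l // l ∈ Ω} × Fin M) (Fin R) ℂ) :
    Matrix (Fin L × Fin M) (Fin R) ℂ :=
  fun p r => if h : p.1 ∈ Ω then X (⟨p.1, h⟩, p.2) r else 0

/-- Structured (block) RIP of order `P` with constant `δ`. -/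
def SRIP (Ψ : Matrix (Fin Np) (Fin L × Fin M) ℂ) (P : ℕ) (δ : ℝ) : Prop :=
  ∀ Ω : Finset (Fin L), Ω.card ≤ P →
    ∀ D : Matrix (Fin L × Fin M) (Fin R) ℂ, SuppOn Ω D →
      (1 - δ) * frob D ^ 2 ≤ frob (Ψ * D) ^ 2 ∧ frob (Ψ * D) ^ 2 ≤ (1 + δ) * frob D ^ 2

/-!
Write `D = D_{Ω̂} + E`, where `E` is the part of `D` on `Ω_T ∖ Ω̂`. Because
`Ψ_{Ω̂}^† Ψ_{Ω̂} = 1`, the error is `D - D̂ = E - Ψ_{Ω̂}^†(ΨE + W)` (the second term expanded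
by zero off `Ω̂`), so `‖D - D̂‖ ≤ ‖E‖ + ‖Ψ_{Ω̂}^†(ΨE + W)‖`. The lower RIP bound of order `P`
gives `(1 - δ_P)‖V‖ ≤ ‖Ψ_{Ω̂}ᴴΨ_{Ω̂}V‖`, hence invertibility of the Gram matrix and
`(1 - δ_P)‖Ψ_{Ω̂}^†X‖ ≤ ‖Ψ_{Ω̂}ᴴX‖`; the upper bound gives `‖Ψ_{Ω̂}ᴴW‖ ≤ √(1 + δ_P)‖W‖` by
duality; and polarizing the RIP of order `2P` over the disjoint supports `Ω̂` and `Ω_T ∖ Ω̂`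
gives `‖Ψ_{Ω̂}ᴴΨE‖ ≤ δ_{2P}‖E‖`.
-/

open scoped InnerProductSpace

section Frobenius

variable {m n k : Type*}

def toEuclideanVec : Matrix m n ℂ →ₗ[ℂ] EuclideanSpace ℂ (m × n) where
  toFun A := WithLp.toLp 2 fun p => A p.1 p.2
  map_add' _ _ := rfl
  map_smul' _ _ := rfl

@[simp]
lemma toEuclideanVec_apply (A : Matrix m n ℂ) (p : m × n) : toEuclideanVec A p = A p.1 p.2 := rfl

variable [Fintype m] [Fintype n] [Fintype k]

lemma frob_eq_norm (A : Matrix m n ℂ) : frob A = ‖toEuclideanVec A‖ := by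
  rw [EuclideanSpace.norm_eq, frob, Fintype.sum_prod_type]
  rfl

lemma frob_nonneg (A : Matrix m n ℂ) : 0 ≤ frob A := Real.sqrt_nonneg _

lemma frob_add_le (A B : Matrix m n ℂ) : frob (A + B) ≤ frob A + frob B := by
  simpa only [frob_eq_norm, map_add] using norm_add_le _ _

lemma frob_sub_le (A B : Matrix m n ℂ) : frob (A - B) ≤ frob A + frob B := by
  simpa only [frob_eq_norm, map_sub] using norm_sub_le _ _

lemma frob_smul (c : ℂ) (A : Matrix m n ℂ) : frob (c • A) = ‖c‖ * frob A := by
  simp only [frob_eq_norm, map_smul, norm_smul]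

lemma frob_eq_zero {A : Matrix m n ℂ} : frob A = 0 ↔ A = 0 := by
  rw [frob_eq_norm, norm_eq_zero]
  refine ⟨fun h => Matrix.ext fun i j => congrArg (· (i, j)) h, fun h => h ▸ map_zero _⟩

@[simp]
lemma frob_zero : frob (0 : Matrix m n ℂ) = 0 := frob_eq_zero.mpr rfl

lemma inner_toEuclideanVec (X Y : Matrix m n ℂ) :
    ⟪toEuclideanVec X, toEuclideanVec Y⟫_ℂ = (Xᴴ * Y).trace := by
  simp only [PiLp.inner_apply, RCLike.inner_apply, Matrix.trace, Matrix.diag, Matrix.mul_apply,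
    Matrix.conjTranspose_apply, Fintype.sum_prod_type, toEuclideanVec]
  rw [Finset.sum_comm]
  exact Finset.sum_congr rfl fun _ _ => Finset.sum_congr rfl fun _ _ => mul_comm _ _

lemma inner_toEuclideanVec_mul_left (B : Matrix n m ℂ) (U : Matrix m k ℂ) (V : Matrix n k ℂ) :
    ⟪toEuclideanVec (B * U), toEuclideanVec V⟫_ℂ =
      ⟪toEuclideanVec U, toEuclideanVec (Bᴴ * V)⟫_ℂ := by
  rw [inner_toEuclideanVec, inner_toEuclideanVec, Matrix.conjTranspose_mul, Matrix.mul_assoc]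

lemma frob_mul_sq_le (A : Matrix m n ℂ) (V : Matrix n k ℂ) :
    frob (A * V) ^ 2 ≤ frob V * frob (Aᴴ * (A * V)) := by
  rw [frob_eq_norm, ← inner_self_eq_norm_sq (𝕜 := ℂ), inner_toEuclideanVec_mul_left,
    frob_eq_norm, frob_eq_norm]
  exact re_inner_le_norm _ _

lemma le_frob_gram_mul {A : Matrix m n ℂ} {c : ℝ}
    (h : ∀ V : Matrix n k ℂ, c * frob V ^ 2 ≤ frob (A * V) ^ 2) (V : Matrix n k ℂ) :
    c * frob V ≤ frob (Aᴴ * A * V) := by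
  have hsq := (h V).trans (frob_mul_sq_le A V)
  rw [Matrix.mul_assoc]
  rcases (frob_nonneg V).eq_or_lt with h0 | hpos
  · rw [← h0, mul_zero]
    exact frob_nonneg _
  · exact le_of_mul_le_mul_left (by linarith) hpos

lemma frob_conjTranspose_mul_le {A : Matrix m n ℂ} {c : ℝ} (hc : 0 ≤ c)
    (h : ∀ V : Matrix n k ℂ, frob (A * V) ≤ c * frob V) (W : Matrix m k ℂ) :
    frob (Aᴴ * W) ≤ c * frob W := by
  have hsq := frob_mul_sq_le Aᴴ W
  rw [Matrix.conjTranspose_conjTranspose] at hsq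
  have hsq' := hsq.trans (mul_le_mul_of_nonneg_left (h _) (frob_nonneg W))
  rcases (frob_nonneg (Aᴴ * W)).eq_or_lt with h0 | hpos
  · rw [← h0]
    exact mul_nonneg hc (frob_nonneg W)
  · exact le_of_mul_le_mul_left (by linarith) hpos

lemma isUnit_det_of_le_frob_mul [DecidableEq n] [Nonempty k] {G : Matrix n n ℂ} {c : ℝ}
    (hc : 0 < c) (h : ∀ V : Matrix n k ℂ, c * frob V ≤ frob (G * V)) : IsUnit G.det := by
  rw [isUnit_iff_ne_zero]
  intro hdet
  obtain ⟨v, hv0, hv⟩ := Matrix.exists_mulVec_eq_zero_iff.mpr hdet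
  have hV := h (Matrix.replicateCol k v)
  rw [← Matrix.replicateCol_mulVec, hv, Matrix.replicateCol_zero, frob_zero] at hV
  have : frob (Matrix.replicateCol k v) = 0 := by
    nlinarith [frob_nonneg (Matrix.replicateCol k v)]
  exact hv0 ((Matrix.replicateCol_eq_zero v).mp (frob_eq_zero.mp this))

end Frobenius

section Blocks

lemma sum_blocks_eq_sum {α : Type*} [AddCommMonoid α] (Ω : Finset (Fin L))
    (g : Fin L × Fin M → α) (hg : ∀ p : Fin L × Fin M, p.1 ∉ Ω → g p = 0) :
    ∑ q : {l // l ∈ Ω} × Fin M, g (q.1, q.2) = ∑ p, g p :=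
  Fintype.sum_of_injective (fun q => ((q.1 : Fin L), q.2))
    (fun _ _ h => Prod.ext (Subtype.ext (Prod.ext_iff.mp h).1) (Prod.ext_iff.mp h).2) _ _
    (fun p hp => hg p fun h => hp ⟨(⟨p.1, h⟩, p.2), rfl⟩) fun _ => rfl

variable {Ω : Finset (Fin L)}

@[simp]
lemma expand_apply_val (X : Matrix ({l // l ∈ Ω} × Fin M) (Fin R) ℂ)
    (q : {l // l ∈ Ω} × Fin M) (r : Fin R) : expand Ω X (q.1, q.2) r = X q r := by
  simp [expand]

lemma suppOn_expand (X : Matrix ({l // l ∈ Ω} × Fin M) (Fin R) ℂ) : SuppOn Ω (expand Ω X) :=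
  fun _ _ hp => dif_neg hp

lemma expand_add (X Y : Matrix ({l // l ∈ Ω} × Fin M) (Fin R) ℂ) :
    expand Ω (X + Y) = expand Ω X + expand Ω Y := by
  ext p r
  by_cases h : p.1 ∈ Ω <;> simp [expand, h]

lemma frob_expand (X : Matrix ({l // l ∈ Ω} × Fin M) (Fin R) ℂ) :
    frob (expand Ω X) = frob X := by
  unfold frob
  rw [← sum_blocks_eq_sum Ω]
  · simp
  · intro p hp
    simp [suppOn_expand X p _ hp]

lemma mul_expand (Ψ : Matrix (Fin Np) (Fin L × Fin M) ℂ)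
    (X : Matrix ({l // l ∈ Ω} × Fin M) (Fin R) ℂ) : Ψ * expand Ω X = bsub Ψ Ω * X := by
  ext i r
  rw [Matrix.mul_apply, Matrix.mul_apply, ← sum_blocks_eq_sum Ω]
  · simp [bsub]
  · intro p hp
    simp [suppOn_expand X p _ hp]

lemma eq_expand_add_expand_sdiff {ΩT : Finset (Fin L)} {D : Matrix (Fin L × Fin M) (Fin R) ℂ}
    (hD : SuppOn ΩT D) :
    D = expand Ω (rsub D Ω) + expand (ΩT \ Ω) (rsub D (ΩT \ Ω)) := by
  ext p r
  by_cases h : p.1 ∈ Ω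
  · simp [expand, rsub, h]
  · by_cases hT : p.1 ∈ ΩT
    · simp [expand, rsub, h, hT]
    · simp [expand, h, hT, hD p r hT]

lemma bpinv_mul_bsub {Ψ : Matrix (Fin Np) (Fin L × Fin M) ℂ} {Ω : Finset (Fin L)}
    (hG : IsUnit ((bsub Ψ Ω)ᴴ * bsub Ψ Ω).det) : bpinv Ψ Ω * bsub Ψ Ω = 1 := by
  rw [bpinv, Matrix.mul_assoc, Matrix.nonsing_inv_mul _ hG]

lemma sub_expand_bpinv_mul {Ψ : Matrix (Fin Np) (Fin L × Fin M) ℂ} {Ω ΩT : Finset (Fin L)}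
    (hG : IsUnit ((bsub Ψ Ω)ᴴ * bsub Ψ Ω).det) {D : Matrix (Fin L × Fin M) (Fin R) ℂ}
    (hD : SuppOn ΩT D) (W : Matrix (Fin Np) (Fin R) ℂ) :
    D - expand Ω (bpinv Ψ Ω * (Ψ * D + W)) =
      expand (ΩT \ Ω) (rsub D (ΩT \ Ω)) -
        expand Ω (bpinv Ψ Ω * (Ψ * expand (ΩT \ Ω) (rsub D (ΩT \ Ω)) + W)) := by
  conv_lhs => rw [eq_expand_add_expand_sdiff (Ω := Ω) hD]
  rw [Matrix.mul_add Ψ, mul_expand, add_assoc, Matrix.mul_add, ← Matrix.mul_assoc,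
    bpinv_mul_bsub hG, Matrix.one_mul, expand_add]
  abel

end Blocks

section Support

variable {Ω Ω' : Finset (Fin L)} {X Y : Matrix (Fin L × Fin M) (Fin R) ℂ}

lemma SuppOn.mono (hX : SuppOn Ω X) (h : Ω ⊆ Ω') : SuppOn Ω' X :=
  fun p r hp => hX p r fun hc => hp (h hc)

lemma SuppOn.add (hX : SuppOn Ω X) (hY : SuppOn Ω Y) : SuppOn Ω (X + Y) := by
  intro p r hp
  simp [hX p r hp, hY p r hp]

lemma SuppOn.sub (hX : SuppOn Ω X) (hY : SuppOn Ω Y) : SuppOn Ω (X - Y) := by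
  intro p r hp
  simp [hX p r hp, hY p r hp]

lemma SuppOn.smul (c : ℂ) (hX : SuppOn Ω X) : SuppOn Ω (c • X) := by
  intro p r hp
  simp [hX p r hp]

lemma inner_toEuclideanVec_eq_zero_of_disjoint (hd : Disjoint Ω Ω') (hX : SuppOn Ω X)
    (hY : SuppOn Ω' Y) : ⟪toEuclideanVec X, toEuclideanVec Y⟫_ℂ = 0 := by
  refine Finset.sum_eq_zero fun p _ => ?_
  by_cases h : p.1.1 ∈ Ω
  · simp [hY p.1 p.2 (Finset.disjoint_left.mp hd h)]
  · simp [hX p.1 p.2 h]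

end Support

namespace SRIP

variable {Ψ : Matrix (Fin Np) (Fin L × Fin M) ℂ} {P : ℕ} {δ : ℝ} {Ω Ω' : Finset (Fin L)}

lemma mul_frob_nonneg (h : SRIP (R := R) Ψ P δ) (hΩ : Ω.card ≤ P)
    {X : Matrix (Fin L × Fin M) (Fin R) ℂ} (hX : SuppOn Ω X) : 0 ≤ δ * frob X := by
  obtain ⟨hlow, hup⟩ := h Ω hΩ X hX
  rcases (frob_nonneg X).eq_or_lt with h0 | hpos
  · rw [← h0, mul_zero]
  · exact mul_nonneg (by nlinarith [pow_pos hpos 2]) hpos.le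

lemma bsub_mul (h : SRIP (R := R) Ψ P δ) (hΩ : Ω.card ≤ P)
    (V : Matrix ({l // l ∈ Ω} × Fin M) (Fin R) ℂ) :
    (1 - δ) * frob V ^ 2 ≤ frob (bsub Ψ Ω * V) ^ 2 ∧
      frob (bsub Ψ Ω * V) ^ 2 ≤ (1 + δ) * frob V ^ 2 := by
  simpa only [frob_expand, mul_expand] using h Ω hΩ (expand Ω V) (suppOn_expand V)

lemma frob_bsub_mul_le (h : SRIP (R := R) Ψ P δ) (hΩ : Ω.card ≤ P)
    (V : Matrix ({l // l ∈ Ω} × Fin M) (Fin R) ℂ) :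
    frob (bsub Ψ Ω * V) ≤ Real.sqrt (1 + δ) * frob V := by
  rw [← Real.sqrt_sq (frob_nonneg (bsub Ψ Ω * V)), ← Real.sqrt_sq (frob_nonneg V),
    ← Real.sqrt_mul' _ (sq_nonneg _)]
  exact Real.sqrt_le_sqrt (h.bsub_mul hΩ V).2

lemma le_frob_gram_bsub_mul (h : SRIP (R := R) Ψ P δ) (hΩ : Ω.card ≤ P)
    (V : Matrix ({l // l ∈ Ω} × Fin M) (Fin R) ℂ) :
    (1 - δ) * frob V ≤ frob ((bsub Ψ Ω)ᴴ * bsub Ψ Ω * V) :=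
  le_frob_gram_mul (fun V => (h.bsub_mul hΩ V).1) V

lemma isUnit_det_gram [NeZero R] (h : SRIP (R := R) Ψ P δ) (hδ : δ < 1) (hΩ : Ω.card ≤ P) :
    IsUnit ((bsub Ψ Ω)ᴴ * bsub Ψ Ω).det :=
  isUnit_det_of_le_frob_mul (k := Fin R) (sub_pos.mpr hδ) (h.le_frob_gram_bsub_mul hΩ)

lemma frob_bpinv_mul_le [NeZero R] (h : SRIP (R := R) Ψ P δ) (hδ : δ < 1) (hΩ : Ω.card ≤ P)
    (X : Matrix (Fin Np) (Fin R) ℂ) :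
    (1 - δ) * frob (bpinv Ψ Ω * X) ≤ frob ((bsub Ψ Ω)ᴴ * X) := by
  have hgram := h.le_frob_gram_bsub_mul hΩ (bpinv Ψ Ω * X)
  rwa [bpinv, ← Matrix.mul_assoc, ← Matrix.mul_assoc,
    Matrix.mul_nonsing_inv _ (h.isUnit_det_gram hδ hΩ), Matrix.one_mul] at hgram

lemma two_mul_re_inner_le (h : SRIP (R := R) Ψ P δ) (hcard : (Ω ∪ Ω').card ≤ P)
    (hd : Disjoint Ω Ω') {X Y : Matrix (Fin L × Fin M) (Fin R) ℂ} (hX : SuppOn Ω X) (hY : SuppOn Ω' Y) :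
    2 * RCLike.re ⟪toEuclideanVec (Ψ * X), toEuclideanVec (Ψ * Y)⟫_ℂ ≤
      δ * (frob X ^ 2 + frob Y ^ 2) := by
  have hXu := hX.mono (Finset.subset_union_left (s₂ := Ω'))
  have hYu := hY.mono (Finset.subset_union_right (s₁ := Ω))
  have hplus := (h _ hcard _ (hXu.add hYu)).2
  have hminus := (h _ hcard _ (hXu.sub hYu)).1
  have horth := inner_toEuclideanVec_eq_zero_of_disjoint hd hX hY
  -- `‖Ψ(X + Y)‖² - ‖Ψ(X - Y)‖² = 4 Re⟪ΨX, ΨY⟫`, while `‖X ± Y‖² = ‖X‖² + ‖Y‖²`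
  simp only [frob_eq_norm, Matrix.mul_add, Matrix.mul_sub, map_add, map_sub] at hplus hminus ⊢
  simp only [norm_add_sq (𝕜 := ℂ), norm_sub_sq (𝕜 := ℂ), horth, map_zero] at hplus hminus
  linarith

lemma re_inner_le (h : SRIP (R := R) Ψ P δ) (hcard : (Ω ∪ Ω').card ≤ P) (hd : Disjoint Ω Ω')
    {X Y : Matrix (Fin L × Fin M) (Fin R) ℂ} (hX : SuppOn Ω X) (hY : SuppOn Ω' Y) :
    RCLike.re ⟪toEuclideanVec (Ψ * X), toEuclideanVec (Ψ * Y)⟫_ℂ ≤ δ * frob X * frob Y := by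
  rcases (frob_nonneg X).eq_or_lt with ha | ha
  · simp [frob_eq_zero.mp ha.symm]
  rcases (frob_nonneg Y).eq_or_lt with hb | hb
  · simp [frob_eq_zero.mp hb.symm]
  -- rescale `X` and `Y` to the common Frobenius norm `‖X‖ ‖Y‖`
  have hscaled := h.two_mul_re_inner_le hcard hd (hX.smul (frob Y : ℂ)) (hY.smul (frob X : ℂ))
  simp only [Matrix.mul_smul, map_smul, inner_smul_left, inner_smul_right, Complex.conj_ofReal,
    RCLike.re_to_complex, ← mul_assoc, ← Complex.ofReal_mul, Complex.re_ofReal_mul, frob_smul,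
    Complex.norm_real, Real.norm_eq_abs, abs_of_pos ha, abs_of_pos hb] at hscaled
  rw [RCLike.re_to_complex]
  refine le_of_mul_le_mul_left ?_ (mul_pos (mul_pos two_pos ha) hb)
  linarith

lemma frob_conjTranspose_bsub_mul_le (h : SRIP (R := R) Ψ P δ) (hcard : (Ω ∪ Ω').card ≤ P)
    (hd : Disjoint Ω Ω') {E : Matrix (Fin L × Fin M) (Fin R) ℂ} (hE : SuppOn Ω' E) :
    frob ((bsub Ψ Ω)ᴴ * (Ψ * E)) ≤ δ * frob E := by
  set Z := (bsub Ψ Ω)ᴴ * (Ψ * E)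
  have hsq : frob Z ^ 2 =
      RCLike.re ⟪toEuclideanVec (Ψ * expand Ω Z), toEuclideanVec (Ψ * E)⟫_ℂ := by
    rw [mul_expand, inner_toEuclideanVec_mul_left, frob_eq_norm,
      ← inner_self_eq_norm_sq (𝕜 := ℂ)]
  have hcorr := h.re_inner_le hcard hd (suppOn_expand Z) hE
  rw [← hsq, frob_expand] at hcorr
  have hδE : 0 ≤ δ * frob E :=
    h.mul_frob_nonneg ((Finset.card_le_card Finset.subset_union_right).trans hcard) hE
  nlinarith [frob_nonneg Z]

end SRIP

/-- error bound for the least-squares estimator on an estimated block support. -/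
theorem ls_estimator_error_bound
    (Ψ : Matrix (Fin Np) (Fin L × Fin M) ℂ) (P : ℕ) (δP δ2P : ℝ)
    (hRIP_P : SRIP (R := R) Ψ P δP) (hRIP_2P : SRIP (R := R) Ψ (2 * P) δ2P)
    (hmono : δP ≤ δ2P) (hδ2P : δ2P < 1)
    (ΩT Ωhat : Finset (Fin L)) (hcT : ΩT.card ≤ P) (hchat : Ωhat.card ≤ P)
    (D : Matrix (Fin L × Fin M) (Fin R) ℂ) (hD : SuppOn ΩT D)
    (W : Matrix (Fin Np) (Fin R) ℂ) (Y : Matrix (Fin Np) (Fin R) ℂ)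
    (hY : Y = Ψ * D + W)
    (Dhat : Matrix (Fin L × Fin M) (Fin R) ℂ)
    (hDhat : Dhat = expand Ωhat (bpinv Ψ Ωhat * Y)) :
    frob (D - Dhat) ≤
      ((1 - δP + δ2P) / (1 - δP)) * frob (rsub D (ΩT \ Ωhat)) +
        (Real.sqrt (1 + δP) / (1 - δP)) * frob W := by
  have hδP : δP < 1 := hmono.trans_lt hδ2P
  rcases Nat.eq_zero_or_pos R with rfl | hR
  · simp [frob] -- matrices with no columns have Frobenius norm `0`
  have : NeZero R := ⟨hR.ne'⟩
  set A := bsub Ψ Ωhat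
  set E := expand (ΩT \ Ωhat) (rsub D (ΩT \ Ωhat))
  have hcard : (Ωhat ∪ (ΩT \ Ωhat)).card ≤ 2 * P := by
    have := Finset.card_le_card (Finset.sdiff_subset (s := ΩT) (t := Ωhat))
    linarith [Finset.card_union_le Ωhat (ΩT \ Ωhat)]
  have hcross : frob (Aᴴ * (Ψ * E)) ≤ δ2P * frob (rsub D (ΩT \ Ωhat)) := by
    simpa only [E, frob_expand] using
      hRIP_2P.frob_conjTranspose_bsub_mul_le hcard Finset.disjoint_sdiff (suppOn_expand _)
  have hnoise : frob (Aᴴ * W) ≤ Real.sqrt (1 + δP) * frob W :=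
    frob_conjTranspose_mul_le (Real.sqrt_nonneg _) (hRIP_P.frob_bsub_mul_le hchat) W
  have hls := hRIP_P.frob_bpinv_mul_le hδP hchat (Ψ * E + W)
  have herr :
      frob (D - Dhat) ≤ frob (rsub D (ΩT \ Ωhat)) + frob (bpinv Ψ Ωhat * (Ψ * E + W)) := by
    rw [hDhat, hY, sub_expand_bpinv_mul (hRIP_P.isUnit_det_gram hδP hchat) hD]
    exact (frob_sub_le _ _).trans_eq (by simp only [E, frob_expand])
  have htri := frob_add_le (Aᴴ * (Ψ * E)) (Aᴴ * W)
  rw [← Matrix.mul_add] at htri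
  rw [div_mul_eq_mul_div, div_mul_eq_mul_div, ← add_div, le_div_iff₀ (sub_pos.mpr hδP)]
  linarith [mul_le_mul_of_nonneg_left herr (sub_pos.mpr hδP).le]
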